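/- (Trivial-extension form of Theorem 1 for odd complement.) Let d ≥ 3 be odd and let u : ℝ × ℝ^d → ℝ^d be a smooth real Schur flow satisfying the barotropic Euler equation with smooth potential Π. Define the last vorticity component Ω_last by (Ω_last)_{jd} = −(Ω_last)_{dj} = ∂_j u_d for j < d, and (Ω_last)_{jk} = 0 when both j < d and k < d. Then Ω_last is Lie-transported by u: for all j, k, ∂_t (Ω_last)_{jk} + Σ_{m=1}^d ( u_m ∂_m (Ω_last)_{jk} + (Ω_last)_{mk} ∂_j u_m + (Ω_last)_{jm} ∂_k u_m ) = 0. -/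

import Mathlib

/-!
Write `Ω_jk = δ_kL a_j - δ_jL a_k` with `a_i = ∂_i u_L`. Expanding, the quadratic stretching
terms `a_j a_k` cancel and the Lie transport of `Ω` equals `δ_kL R_j - δ_jL R_k`, where
`R_i = D_t a_i + Σ_m a_m ∂_i u_m` is the `x_i`-derivative of the `L`-th Euler equation,
so `R_i = -∂_i ∂_L P`. For a real Schur flow in odd dimension the components `u_m`, `m ≠ L`,
do not depend on `x_L`; differentiating their Euler equations in `x_L` gives `∂_m ∂_L P = 0`.
Hence `R_i = -δ_iL ∂_L² P` and the two terms cancel.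
-/

/-- Partial derivative in time of a function on `ℝ × ℝ^d`. -/
noncomputable def pdt {d : ℕ} (f : ℝ × (Fin d → ℝ) → ℝ) (p : ℝ × (Fin d → ℝ)) : ℝ :=
  fderiv ℝ f p (1, 0)

/-- Partial derivative in the `j`-th spatial coordinate of a function on `ℝ × ℝ^d`. -/
noncomputable def pdx {d : ℕ} (j : Fin d) (f : ℝ × (Fin d → ℝ) → ℝ) (p : ℝ × (Fin d → ℝ)) : ℝ :=
  fderiv ℝ f p (0, Pi.single j 1)

/-- Real Schur flow: with 1-based indices `J = j+1`, `K = k+1`, we have `∂_J u_K = 0`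
whenever `J > 2⌈K/2⌉`; here `⌈K/2⌉ = (K+1)/2` in natural-number division. -/
def IsRSF {d : ℕ} (u : Fin d → ℝ × (Fin d → ℝ) → ℝ) : Prop :=
  ∀ j k : Fin d, 2 * (((k : ℕ) + 1 + 1) / 2) < (j : ℕ) + 1 → ∀ p, pdx j (u k) p = 0

theorem fderiv_fderiv_apply_comm {E F : Type*} [NormedAddCommGroup E] [NormedSpace ℝ E]
    [NormedAddCommGroup F] [NormedSpace ℝ F] {f : E → F} (hf : ContDiff ℝ 2 f) (p v w : E) :
    fderiv ℝ (fun q => fderiv ℝ f q v) p w = fderiv ℝ (fun q => fderiv ℝ f q w) p v := by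
  have hf' : DifferentiableAt ℝ (fderiv ℝ f) p :=
    (hf.fderiv_right (m := 1) le_rfl).differentiable one_ne_zero p
  have happly (z : E) :
      fderiv ℝ (fun q => fderiv ℝ f q z) p = (fderiv ℝ (fderiv ℝ f) p).flip z := by
    rw [fderiv_clm_apply hf' (differentiableAt_const z)]
    simp
  rw [happly, happly]
  exact hf.contDiffAt.isSymmSndFDerivAt (by simp) w v

section PartialDerivatives

variable {d : ℕ} {f g : ℝ × (Fin d → ℝ) → ℝ} {p : ℝ × (Fin d → ℝ)}

theorem ContDiff.pdx {n : WithTop ℕ∞} (hf : ContDiff ℝ (n + 1) f) (j : Fin d) :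
    ContDiff ℝ n (pdx j f) :=
  (hf.fderiv_right le_rfl).clm_apply contDiff_const

theorem ContDiff.pdt {n : WithTop ℕ∞} (hf : ContDiff ℝ (n + 1) f) : ContDiff ℝ n (pdt f) :=
  (hf.fderiv_right le_rfl).clm_apply contDiff_const

theorem pdx_pdx_comm (hf : ContDiff ℝ 2 f) (i j : Fin d) (p : ℝ × (Fin d → ℝ)) :
    pdx i (pdx j f) p = pdx j (pdx i f) p :=
  fderiv_fderiv_apply_comm hf p _ _

theorem pdx_pdt_comm (hf : ContDiff ℝ 2 f) (i : Fin d) (p : ℝ × (Fin d → ℝ)) :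
    pdx i (pdt f) p = pdt (pdx i f) p :=
  fderiv_fderiv_apply_comm hf p _ _

theorem pdx_add (hf : DifferentiableAt ℝ f p) (hg : DifferentiableAt ℝ g p) (j : Fin d) :
    pdx j (fun q => f q + g q) p = pdx j f p + pdx j g p := by
  simp [pdx, fderiv_fun_add hf hg]

theorem pdx_mul (hf : DifferentiableAt ℝ f p) (hg : DifferentiableAt ℝ g p) (j : Fin d) :
    pdx j (fun q => f q * g q) p = f p * pdx j g p + g p * pdx j f p := by
  simp [pdx, fderiv_fun_mul hf hg]

theorem pdx_sum {ι : Type*} {s : Finset ι} {F : ι → ℝ × (Fin d → ℝ) → ℝ}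
    (hF : ∀ i ∈ s, DifferentiableAt ℝ (F i) p) (j : Fin d) :
    pdx j (fun q => ∑ i ∈ s, F i q) p = ∑ i ∈ s, pdx j (F i) p := by
  simp [pdx, fderiv_fun_sum hF]

theorem pdx_neg (f : ℝ × (Fin d → ℝ) → ℝ) (j : Fin d) (p : ℝ × (Fin d → ℝ)) :
    pdx j (fun q => -f q) p = -pdx j f p := by
  simp [pdx]

noncomputable def materialDeriv (u : Fin d → ℝ × (Fin d → ℝ) → ℝ) (f : ℝ × (Fin d → ℝ) → ℝ)
    (p : ℝ × (Fin d → ℝ)) : ℝ :=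
  pdt f p + ∑ j, u j p * pdx j f p

variable {u : Fin d → ℝ × (Fin d → ℝ) → ℝ}

theorem materialDeriv_const (c : ℝ) (p : ℝ × (Fin d → ℝ)) :
    materialDeriv u (fun _ => c) p = 0 := by
  simp [materialDeriv, pdt, pdx]

theorem materialDeriv_const_mul_sub_const_mul (hf : DifferentiableAt ℝ f p)
    (hg : DifferentiableAt ℝ g p) (a b : ℝ) :
    materialDeriv u (fun q => a * f q - b * g q) p
      = a * materialDeriv u f p - b * materialDeriv u g p := by
  have hderiv (v : ℝ × (Fin d → ℝ)) :
      fderiv ℝ (fun q => a * f q - b * g q) p v = a * fderiv ℝ f p v - b * fderiv ℝ g p v := by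
    rw [fderiv_fun_sub (hf.const_mul a) (hg.const_mul b), fderiv_const_mul hf,
      fderiv_const_mul hg]
    rfl
  simp only [materialDeriv, pdt, pdx, hderiv, mul_add, Finset.mul_sum, mul_sub,
    Finset.sum_sub_distrib, mul_left_comm (u _ p)]
  ring

theorem pdx_materialDeriv (hu : ∀ j, DifferentiableAt ℝ (u j) p) (hf : ContDiff ℝ 2 f)
    (i : Fin d) :
    pdx i (materialDeriv u f) p
      = materialDeriv u (pdx i f) p + ∑ j, pdx j f p * pdx i (u j) p := by
  have hpdx (j : Fin d) : DifferentiableAt ℝ (pdx j f) p :=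
    (hf.pdx (n := 1) j).differentiable one_ne_zero p
  have hpdt : DifferentiableAt ℝ (pdt f) p := (hf.pdt (n := 1)).differentiable one_ne_zero p
  have hsum : DifferentiableAt ℝ (fun q => ∑ j, u j q * pdx j f q) p := by fun_prop
  change pdx i (fun q => pdt f q + ∑ j, u j q * pdx j f q) p = _
  rw [pdx_add hpdt hsum, pdx_sum fun j _ => (hu j).fun_mul (hpdx j)]
  simp only [pdx_mul (hu _) (hpdx _), materialDeriv, pdx_pdt_comm hf, pdx_pdx_comm hf i,
    Finset.sum_add_distrib]
  ring

end PartialDerivatives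

section Euler

variable {d : ℕ} {u : Fin d → ℝ × (Fin d → ℝ) → ℝ} {P : ℝ × (Fin d → ℝ) → ℝ}

def IsEulerSolution (u : Fin d → ℝ × (Fin d → ℝ) → ℝ) (P : ℝ × (Fin d → ℝ) → ℝ) : Prop :=
  ∀ k p, materialDeriv u (u k) p = -pdx k P p

theorem IsEulerSolution.materialDeriv_pdx (h : IsEulerSolution u P)
    (hu : ∀ k, ContDiff ℝ 2 (u k)) (i k : Fin d) (p : ℝ × (Fin d → ℝ)) :
    materialDeriv u (pdx i (u k)) p + ∑ m, pdx m (u k) p * pdx i (u m) p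
      = -pdx i (pdx k P) p := by
  rw [← pdx_materialDeriv (fun j => (hu j).differentiable two_ne_zero p) (hu k),
    show materialDeriv u (u k) = fun q => -pdx k P q from funext (h k), pdx_neg]

theorem IsEulerSolution.pdx_pdx_eq_zero (h : IsEulerSolution u P)
    (hu : ∀ k, ContDiff ℝ 2 (u k)) (hP : ContDiff ℝ 2 P) {L : Fin d}
    (hL : ∀ m ≠ L, ∀ p, pdx L (u m) p = 0) {m : Fin d} (hm : m ≠ L) (p : ℝ × (Fin d → ℝ)) :
    pdx m (pdx L P) p = 0 := by
  have hconst : pdx L (u m) = fun _ => 0 := funext (hL m hm)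
  have hterm (j : Fin d) : pdx j (u m) p * pdx L (u j) p = 0 := by
    by_cases hj : j = L
    · rw [hj, hL m hm p, zero_mul]
    · rw [hL j hj p, mul_zero]
  have := h.materialDeriv_pdx hu L m p
  rw [hconst, materialDeriv_const, Finset.sum_eq_zero fun j _ => hterm j] at this
  rw [pdx_pdx_comm hP]
  linarith

end Euler

theorem IsRSF.pdx_last_eq_zero {d : ℕ} {u : Fin d → ℝ × (Fin d → ℝ) → ℝ} (hRSF : IsRSF u)
    (hodd : Odd d) {L : Fin d} (hL : (L : ℕ) = d - 1) {m : Fin d} (hm : m ≠ L)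
    (p : ℝ × (Fin d → ℝ)) : pdx L (u m) p = 0 := by
  -- `2⌈(m+1)/2⌉` is even and at most `d`, hence `< d = L + 1` because `d` is odd.
  refine hRSF L m ?_ p
  have hm' : (m : ℕ) ≠ L := Fin.val_ne_of_ne hm
  obtain ⟨t, ht⟩ := hodd
  omega

-- The quadratic terms `±G j L * G k L` cancel.
theorem sum_stretching_single {ι : Type*} [Fintype ι] [DecidableEq ι] (L : ι)
    (G : ι → ι → ℝ) (j k : ι) :
    ∑ m, (((Pi.single L 1 : ι → ℝ) k * G m L - (Pi.single L 1 : ι → ℝ) m * G k L) * G j m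
        + ((Pi.single L 1 : ι → ℝ) m * G j L - (Pi.single L 1 : ι → ℝ) j * G m L) * G k m)
      = (Pi.single L 1 : ι → ℝ) k * ∑ m, G m L * G j m
        - (Pi.single L 1 : ι → ℝ) j * ∑ m, G m L * G k m := by
  simp only [Pi.single_apply, ite_mul, one_mul, zero_mul, sub_mul, Finset.sum_add_distrib,
    Finset.sum_sub_distrib, Finset.sum_ite_irrel, Finset.sum_const_zero, Finset.sum_ite_eq',
    Finset.mem_univ, if_true, Finset.mul_sum]
  ring

section LieTransport

variable {d : ℕ} {u : Fin d → ℝ × (Fin d → ℝ) → ℝ}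

noncomputable def lieTransport (u : Fin d → ℝ × (Fin d → ℝ) → ℝ)
    (Ω : Fin d → Fin d → ℝ × (Fin d → ℝ) → ℝ) (j k : Fin d) (p : ℝ × (Fin d → ℝ)) : ℝ :=
  pdt (Ω j k) p
    + ∑ m, (u m p * pdx m (Ω j k) p + Ω m k p * pdx j (u m) p + Ω j m p * pdx k (u m) p)

-- `Ω = d(u_L dx_L)`, with `Pi.single L 1` as the Kronecker delta `δ_L`.
theorem lieTransport_exteriorDeriv_single (hu : ∀ k, ContDiff ℝ 2 (u k)) {L : Fin d}
    {Ω : Fin d → Fin d → ℝ × (Fin d → ℝ) → ℝ}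
    (hΩ : ∀ j k, Ω j k = fun q => (Pi.single L 1 : Fin d → ℝ) k * pdx j (u L) q
      - (Pi.single L 1 : Fin d → ℝ) j * pdx k (u L) q)
    (j k : Fin d) (p : ℝ × (Fin d → ℝ)) :
    lieTransport u Ω j k p
      = (Pi.single L 1 : Fin d → ℝ) k
          * (materialDeriv u (pdx j (u L)) p + ∑ m, pdx m (u L) p * pdx j (u m) p)
        - (Pi.single L 1 : Fin d → ℝ) j
          * (materialDeriv u (pdx k (u L)) p + ∑ m, pdx m (u L) p * pdx k (u m) p) := by
  have hsplit : lieTransport u Ω j k p = materialDeriv u (Ω j k) p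
      + ∑ m, (Ω m k p * pdx j (u m) p + Ω j m p * pdx k (u m) p) := by
    simp only [lieTransport, materialDeriv, Finset.sum_add_distrib]
    ring
  have ha (i : Fin d) : DifferentiableAt ℝ (pdx i (u L)) p :=
    ((hu L).pdx (n := 1) i).differentiable one_ne_zero p
  rw [hsplit, hΩ j k, materialDeriv_const_mul_sub_const_mul (ha j) (ha k)]
  simp only [hΩ]
  rw [sum_stretching_single L (fun i m => pdx i (u m) p)]
  ring

end LieTransport

theorem rsf_last_component_lie_transport_general
    {d : ℕ} (hodd : Odd d)
    (u : Fin d → ℝ × (Fin d → ℝ) → ℝ) (P : ℝ × (Fin d → ℝ) → ℝ)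
    (hu : ∀ k, ContDiff ℝ (⊤ : ℕ∞) (u k)) (hP : ContDiff ℝ (⊤ : ℕ∞) P)
    (hRSF : IsRSF u)
    (heuler : ∀ k p, pdt (u k) p + ∑ j, u j p * pdx j (u k) p = -(pdx k P p))
    (L : Fin d) (hL : (L : ℕ) = d - 1)
    (Ω : Fin d → Fin d → ℝ × (Fin d → ℝ) → ℝ)
    (hΩ₁ : ∀ j : Fin d, j ≠ L → ∀ p, Ω j L p = pdx j (u L) p)
    (hΩ₂ : ∀ j : Fin d, j ≠ L → ∀ p, Ω L j p = -(pdx j (u L) p))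
    (hΩ₃ : ∀ j k : Fin d, j ≠ L → k ≠ L → ∀ p, Ω j k p = 0)
    (hΩ₄ : ∀ p, Ω L L p = 0) :
    ∀ j k p, pdt (Ω j k) p
      + ∑ m, (u m p * pdx m (Ω j k) p + Ω m k p * pdx j (u m) p + Ω j m p * pdx k (u m) p)
      = 0 := by
  have hu2 (k : Fin d) : ContDiff ℝ 2 (u k) := (hu k).of_le (WithTop.coe_le_coe.mpr le_top)
  have hP2 : ContDiff ℝ 2 P := hP.of_le (WithTop.coe_le_coe.mpr le_top)
  have hΩ (j k : Fin d) : Ω j k = fun q => (Pi.single L 1 : Fin d → ℝ) k * pdx j (u L) q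
      - (Pi.single L 1 : Fin d → ℝ) j * pdx k (u L) q := by
    funext q
    by_cases hj : j = L <;> by_cases hk : k = L <;> simp [hj, hk, hΩ₁, hΩ₂, hΩ₃, hΩ₄]
  have hE : IsEulerSolution u P := heuler
  have hR (i : Fin d) (p : ℝ × (Fin d → ℝ)) :
      materialDeriv u (pdx i (u L)) p + ∑ m, pdx m (u L) p * pdx i (u m) p
        = -((Pi.single L 1 : Fin d → ℝ) i * pdx L (pdx L P) p) := by
    rw [hE.materialDeriv_pdx hu2 i L p]
    by_cases hi : i = L
    · simp [hi]
    · simp [hi, hE.pdx_pdx_eq_zero hu2 hP2 (fun m hm => hRSF.pdx_last_eq_zero hodd hL hm) hi p]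
  intro j k p
  change lieTransport u Ω j k p = 0
  rw [lieTransport_exteriorDeriv_single hu2 hΩ, hR, hR]
  ring

/-- for odd `d ≥ 3` and a real Schur flow solving the barotropic Euler
equation, the last vorticity component `Ω_last = d(u_d dx_d)`, with `(Ω_last)_{jd} = ∂_j u_d`
for `j < d` and vanishing entries when both indices are `< d`, is Lie-transported by `u`. -/
theorem rsf_last_component_lie_transport
    {d : ℕ} (hd : 3 ≤ d) (hodd : Odd d)
    (u : Fin d → ℝ × (Fin d → ℝ) → ℝ) (P : ℝ × (Fin d → ℝ) → ℝ)
    (hu : ∀ k, ContDiff ℝ (⊤ : ℕ∞) (u k)) (hP : ContDiff ℝ (⊤ : ℕ∞) P)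
    (hRSF : IsRSF u)
    (heuler : ∀ k p, pdt (u k) p + ∑ j, u j p * pdx j (u k) p = -(pdx k P p))
    (L : Fin d) (hL : (L : ℕ) = d - 1)
    (Ω : Fin d → Fin d → ℝ × (Fin d → ℝ) → ℝ)
    (hΩ₁ : ∀ j : Fin d, j ≠ L → ∀ p, Ω j L p = pdx j (u L) p)
    (hΩ₂ : ∀ j : Fin d, j ≠ L → ∀ p, Ω L j p = -(pdx j (u L) p))
    (hΩ₃ : ∀ j k : Fin d, j ≠ L → k ≠ L → ∀ p, Ω j k p = 0)
    (hΩ₄ : ∀ p, Ω L L p = 0) :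
    ∀ j k p, pdt (Ω j k) p
      + ∑ m, (u m p * pdx m (Ω j k) p + Ω m k p * pdx j (u m) p + Ω j m p * pdx k (u m) p)
      = 0 :=
  rsf_last_component_lie_transport_general hodd u P hu hP hRSF heuler L hL Ω hΩ₁ hΩ₂ hΩ₃ hΩ₄
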